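/- arXiv:0909.5244 — 3 statements merged into one kernel-verified Lean document; each statement's English description precedes it below -/
import Mathlib

section
/- Let d, k, ℓ be positive integers with 2k > d, let ε ∈ (0,1) with ε > 2k/ℓ, and let ρ : ℝ^d → ℝ be a positive measurable function satisfying (1-ε)-slow growth with constant C_sg > 0. Then there exists a constant C > 0, depending only on d, k, ℓ, ε and C_sg, such that for every x ∈ ℝ^d, ∫_{ℝ^d} ρ(α)^{2k-d} · (1 + |x-α|/ρ(α))^{-(ℓ+d-2k)} dα ≤ C · ρ(x)^{2k} (in particular the integral is finite). -/
/-!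
Slow growth gives `ρ α ≲ ρ x ⟨x - α⟩^{1-ε}` and `1 + |x - α|/ρ α ≳ ⟨x - α⟩^ε`, where
`⟨x - α⟩ = 1 + |x - α|/ρ x`. Hence the integrand is at most a constant times
`ρ x ^ (2k - d) ⟨x - α⟩^{-(εℓ - 2k + d)}`, and since `εℓ - 2k + d > d`, rescaling by `ρ x`
shows that this integrates to a constant times `ρ x ^ (2k - d) ρ x ^ d`.
-/

open Real MeasureTheory Module
open scoped ENNReal

def SlowGrowth {E : Type*} [Norm E] [Sub E] (ε C : ℝ) (ρ : E → ℝ) : Prop :=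
  ∀ x α, ρ α ≤ C * ρ x * (1 + ‖x - α‖ / ρ x) ^ (1 - ε)

section Pointwise

variable {ε C r ρ t : ℝ}

theorem rpow_le_max_mul_one_add_div (hε : ε ≤ 1) (hr : 0 < r)
    (hρ : 0 < ρ) (ht : 0 ≤ t) (hslow : ρ ≤ C * r * (1 + t / r) ^ (1 - ε)) :
    (1 + t / r) ^ ε ≤ max 1 C * (1 + t / ρ) := by
  set u := 1 + t / r
  set K := max 1 C
  have hu : 1 ≤ u := le_add_of_nonneg_right (by positivity)
  have hv : 1 ≤ u ^ (1 - ε) := one_le_rpow hu (by linarith)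
  have hK : 0 < K := lt_max_of_lt_left one_pos
  have hρK : ρ ≤ K * r * u ^ (1 - ε) := hslow.trans (by gcongr; exact le_max_right 1 C)
  calc u ^ ε = u / u ^ (1 - ε) := by
        conv_lhs => rw [← sub_sub_cancel 1 ε]
        rw [rpow_sub (by positivity), rpow_one]
    _ ≤ 1 + (u - 1) / u ^ (1 - ε) := by
        rw [div_le_iff₀ (by positivity), add_mul, div_mul_cancel₀ _ (by positivity)]
        linarith
    _ = 1 + K * (t / (K * r * u ^ (1 - ε))) := by
        simp only [u, add_sub_cancel_left]
        field_simp
    _ ≤ K + K * (t / ρ) := by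
        gcongr
        exact le_max_left 1 C
    _ = K * (1 + t / ρ) := by ring

theorem rpow_mul_one_add_div_rpow_neg_le {a m : ℝ} (hε : ε ≤ 1) (ha : 0 ≤ a) (hm : 0 ≤ m)
    (hr : 0 < r) (hρ : 0 < ρ) (ht : 0 ≤ t) (hslow : ρ ≤ C * r * (1 + t / r) ^ (1 - ε)) :
    ρ ^ a * (1 + t / ρ) ^ (-m) ≤
      max 1 C ^ (a + m) * r ^ a * (1 + t / r) ^ (-(ε * (a + m) - a)) := by
  set u := 1 + t / r
  set K := max 1 C
  have hu : 0 < u := by positivity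
  have hK : 0 < K := lt_max_of_lt_left one_pos
  have hρK : ρ ≤ K * r * u ^ (1 - ε) := hslow.trans (by gcongr; exact le_max_right 1 C)
  have hlower : K⁻¹ * u ^ ε ≤ 1 + t / ρ := by
    rw [inv_mul_le_iff₀ hK]
    exact rpow_le_max_mul_one_add_div hε hr hρ ht hslow
  calc ρ ^ a * (1 + t / ρ) ^ (-m)
      ≤ (K * r * u ^ (1 - ε)) ^ a * (K⁻¹ * u ^ ε) ^ (-m) :=
        mul_le_mul (rpow_le_rpow hρ.le hρK ha)
          (rpow_le_rpow_of_nonpos (by positivity) hlower (neg_nonpos.mpr hm))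
          (by positivity) (by positivity)
    _ = K ^ (a + m) * r ^ a * u ^ (-(ε * (a + m) - a)) := by
        rw [mul_rpow (by positivity) (by positivity), mul_rpow hK.le hr.le,
          mul_rpow (by positivity) (by positivity), inv_rpow hK.le, ← rpow_neg hK.le, neg_neg,
          ← rpow_mul hu.le, ← rpow_mul hu.le, rpow_add hK,
          show -(ε * (a + m) - a) = (1 - ε) * a + ε * -m by ring, rpow_add hu]
        ring

end Pointwise

theorem lintegral_one_add_norm_rpow_neg_pos {E : Type*} [NormedAddCommGroup E]
    [MeasurableSpace E] [BorelSpace E] (μ : Measure E) [NeZero μ] (s : ℝ) :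
    0 < ∫⁻ y, ENNReal.ofReal ((1 + ‖y‖) ^ (-s)) ∂μ := by
  have hsupp : Function.support (fun y : E ↦ ENNReal.ofReal ((1 + ‖y‖) ^ (-s))) = Set.univ :=
    Set.eq_univ_of_forall fun y ↦ (ENNReal.ofReal_pos.mpr (by positivity)).ne'
  rw [lintegral_pos_iff_support (by fun_prop), hsupp]
  exact Measure.measure_univ_pos.mpr (NeZero.ne μ)

section Integral

variable {E : Type*} [NormedAddCommGroup E] [NormedSpace ℝ E] [FiniteDimensional ℝ E]
  [MeasurableSpace E] [BorelSpace E] (μ : Measure E) [μ.IsAddHaarMeasure]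

theorem lintegral_comp_inv_smul_addHaar {f : E → ℝ≥0∞} (hf : Measurable f) {r : ℝ}
    (hr : r ≠ 0) :
    ∫⁻ y, f (r⁻¹ • y) ∂μ = ENNReal.ofReal |r ^ finrank ℝ E| * ∫⁻ y, f y ∂μ := by
  rw [← lintegral_map hf (measurable_const_smul r⁻¹),
    Measure.map_addHaar_smul μ (inv_ne_zero hr), lintegral_smul_measure, smul_eq_mul, inv_pow,
    inv_inv]

theorem lintegral_one_add_norm_sub_div_rpow_neg (s : ℝ) {r : ℝ} (hr : 0 < r) (x : E) :
    ∫⁻ α, ENNReal.ofReal ((1 + ‖x - α‖ / r) ^ (-s)) ∂μ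
      = ENNReal.ofReal (r ^ finrank ℝ E) * ∫⁻ y, ENNReal.ofReal ((1 + ‖y‖) ^ (-s)) ∂μ := by
  have hg : Measurable fun y : E ↦ ENNReal.ofReal ((1 + ‖y‖) ^ (-s)) := by fun_prop
  have hscale (v : E) : ‖v‖ / r = ‖r⁻¹ • v‖ := by
    rw [norm_smul, norm_inv, Real.norm_of_nonneg hr.le, inv_mul_eq_div]
  simp_rw [norm_sub_rev x, hscale]
  rw [lintegral_sub_right_eq_self (fun y ↦ ENNReal.ofReal ((1 + ‖r⁻¹ • y‖) ^ (-s))) x,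
    lintegral_comp_inv_smul_addHaar μ hg hr.ne', abs_of_pos (by positivity)]

theorem SlowGrowth.lintegral_rpow_mul_one_add_div_rpow_neg_le {ε C a m : ℝ} {ρ : E → ℝ}
    (hslow : SlowGrowth ε C ρ) (hρ : ∀ x, 0 < ρ x) (hε : ε ≤ 1) (ha : 0 ≤ a) (hm : 0 ≤ m)
    (hdecay : (finrank ℝ E : ℝ) < ε * (a + m) - a) (x : E) :
    ∫⁻ α, ENNReal.ofReal (ρ α ^ a * (1 + ‖x - α‖ / ρ α) ^ (-m)) ∂μ ≤
      ENNReal.ofReal (max 1 C ^ (a + m) *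
        (∫⁻ y, ENNReal.ofReal ((1 + ‖y‖) ^ (-(ε * (a + m) - a))) ∂μ).toReal *
          ρ x ^ (a + finrank ℝ E)) := by
  have hr := hρ x
  have hfinite := (finite_integral_one_add_norm (μ := μ) hdecay).ne
  calc _ ≤ ∫⁻ α, ENNReal.ofReal (max 1 C ^ (a + m) * ρ x ^ a) *
          ENNReal.ofReal ((1 + ‖x - α‖ / ρ x) ^ (-(ε * (a + m) - a))) ∂μ := by
        refine lintegral_mono fun α ↦ ?_
        rw [← ENNReal.ofReal_mul (by positivity)]
        exact ENNReal.ofReal_le_ofReal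
          (rpow_mul_one_add_div_rpow_neg_le hε ha hm hr (hρ α) (norm_nonneg _) (hslow x α))
    _ = _ := by
        rw [lintegral_const_mul' _ _ ENNReal.ofReal_ne_top,
          lintegral_one_add_norm_sub_div_rpow_neg μ _ hr, ← ENNReal.ofReal_toReal hfinite,
          ← ENNReal.ofReal_mul (by positivity), ← ENNReal.ofReal_mul (by positivity),
          ENNReal.ofReal_toReal hfinite, ← rpow_natCast, rpow_add hr]
        ring_nf

end Integral

theorem slow_growth_integral_bound_general
    (d k l : ℕ) (hl : 0 < l) (hdk : d < 2 * k)
    (ε : ℝ) (hε1 : ε < 1) (hεl : (2 * k : ℝ) / l < ε)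
    (Csg : ℝ) :
    ∃ C > 0, ∀ ρ : EuclideanSpace ℝ (Fin d) → ℝ, Measurable ρ → (∀ x, 0 < ρ x) →
      (∀ x α, ρ α ≤ Csg * ρ x * (1 + ‖x - α‖ / ρ x) ^ (1 - ε)) →
      ∀ x, (∫⁻ α, ENNReal.ofReal
          (ρ α ^ ((2 * k : ℝ) - d) * (1 + ‖x - α‖ / ρ α) ^ (-((l : ℝ) + d - 2 * k))))
        ≤ ENNReal.ofReal (C * ρ x ^ (2 * k : ℝ)) := by
  have hkl : (2 * k : ℝ) < ε * l := by rwa [div_lt_iff₀ (by exact_mod_cast hl)] at hεl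
  have hdk' : (d : ℝ) < 2 * k := by exact_mod_cast hdk
  have hlk : 2 * k < (l : ℝ) := by nlinarith
  have hexp : (2 * k - d) + (l + d - 2 * k : ℝ) = l := by ring
  have hdecay : (finrank ℝ (EuclideanSpace ℝ (Fin d)) : ℝ) < ε * l - (2 * k - d) := by
    rw [finrank_euclideanSpace_fin]; linarith
  refine ⟨max 1 Csg ^ (l : ℝ) * (∫⁻ y : EuclideanSpace ℝ (Fin d),
      ENNReal.ofReal ((1 + ‖y‖) ^ (-(ε * l - (2 * k - d))))).toReal,
    mul_pos (rpow_pos_of_pos (lt_max_of_lt_left one_pos) _) (ENNReal.toReal_pos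
      (lintegral_one_add_norm_rpow_neg_pos _ _).ne' (finite_integral_one_add_norm hdecay).ne),
    fun ρ _ hρ hslow x ↦ ?_⟩
  have key := SlowGrowth.lintegral_rpow_mul_one_add_div_rpow_neg_le volume hslow hρ hε1.le
    (a := 2 * k - d) (m := l + d - 2 * k) (by linarith) (by linarith) (by rwa [hexp]) x
  rwa [hexp, finrank_euclideanSpace_fin, sub_add_cancel] at key

/-- For positive integers `d, k, ℓ` with `2k > d`, `ε ∈ (0,1)` with
`ε > 2k/ℓ`, and a positive measurable `ρ` satisfying `(1-ε)`-slow growth with constant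
`C_sg`, there is `C > 0` depending only on `d, k, ℓ, ε, C_sg` such that for every `x`,
`∫ ρ(α)^(2k-d) (1 + |x-α|/ρ(α))^(-(ℓ+d-2k)) dα ≤ C ρ(x)^(2k)` (in particular the
integral is finite). -/
theorem slow_growth_integral_bound
    (d k l : ℕ) (hd : 0 < d) (hk : 0 < k) (hl : 0 < l) (hdk : d < 2 * k)
    (ε : ℝ) (hε0 : 0 < ε) (hε1 : ε < 1) (hεl : (2 * k : ℝ) / l < ε)
    (Csg : ℝ) (hCsg : 0 < Csg) :
    ∃ C > 0, ∀ ρ : EuclideanSpace ℝ (Fin d) → ℝ, Measurable ρ → (∀ x, 0 < ρ x) →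
      (∀ x α, ρ α ≤ Csg * ρ x * (1 + ‖x - α‖ / ρ x) ^ (1 - ε)) →
      ∀ x, (∫⁻ α, ENNReal.ofReal
          (ρ α ^ ((2 * k : ℝ) - d) * (1 + ‖x - α‖ / ρ α) ^ (-((l : ℝ) + d - 2 * k))))
        ≤ ENNReal.ofReal (C * ρ x ^ (2 * k : ℝ)) :=
  slow_growth_integral_bound_general d k l hl hdk ε hε1 hεl Csg
end

section
/- Let d, k, ℓ be positive integers with 2k > d, let ε ∈ (2k/ℓ, 1), and let ρ : ℝ^d → ℝ be a positive measurable function satisfying (1-ε)-slow growth with constant C_sg > 0. Let f : ℝ^d → ℝ be a C^{2k} function with compact support, and let g : ℝ^d → ℝ be any function such that for some C₀ > 0 and all x ∈ ℝ^d, |f(x) - g(x)| ≤ C₀ · ∫_{ℝ^d} |Δ^k f(α)| · ρ(α)^{2k-d} · (1 + |x-α|/ρ(α))^{-(ℓ+d-2k)} dα, where Δ^k denotes the k-fold iterated Laplacian. Then there exists a constant C > 0, depending only on d, k, ℓ, ε, C_sg and C₀, such that for all x ∈ ℝ^d, |f(x) - g(x)| ≤ C · ρ(x)^{2k} · ‖Δ^k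 f‖_∞. -/
/-!
Fix `x` and write `r = ρ x`, `t = ‖x - α‖ / r`. Slow growth bounds `ρ α ≤ C r (1 + t)^(1-ε)`,
and feeding this back into `‖x - α‖ / ρ α` gives the reverse bound
`(1 + t)^ε ≤ C (1 + ‖x - α‖ / ρ α)`. Together they dominate the kernel
`ρ α^(2k-d) (1 + ‖x - α‖/ρ α)^(-(ℓ+d-2k))` by `C^ℓ r^(2k-d) (1 + t)^(2k-d-εℓ)`. Since `εℓ > 2k`
the exponent is below `-d`, so this majorant is integrable, and rescaling by `r` shows its
integral is `r^d ∫ (1 + ‖u‖)^(2k-d-εℓ) du`. Bounding `|Δᵏf|` by its supremum yields `r^(2k)`.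
-/

open Real MeasureTheory

noncomputable def Lap (d : ℕ) (f : EuclideanSpace ℝ (Fin d) → ℝ) :
    EuclideanSpace ℝ (Fin d) → ℝ :=
  fun x => ∑ i : Fin d,
    iteratedFDeriv ℝ 2 f x ![EuclideanSpace.single i 1, EuclideanSpace.single i 1]

open Module

section Laplacian

variable {d : ℕ} {f : EuclideanSpace ℝ (Fin d) → ℝ}

theorem ContDiff.lap {n : ℕ} (hf : ContDiff ℝ (n + 2 : ℕ) f) : ContDiff ℝ n (Lap d f) := by
  have hD2 : ContDiff ℝ n (iteratedFDeriv ℝ 2 f) :=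
    hf.iteratedFDeriv_right (by push_cast; exact le_rfl)
  refine ContDiff.sum fun i _ => ?_
  exact (ContinuousMultilinearMap.apply ℝ (fun _ : Fin 2 => EuclideanSpace ℝ (Fin d)) ℝ
    ![EuclideanSpace.single i 1, EuclideanSpace.single i 1]).contDiff.comp hD2

theorem HasCompactSupport.lap (hf : HasCompactSupport f) : HasCompactSupport (Lap d f) :=
  (hf.iteratedFDeriv (𝕜 := ℝ) 2).comp_left
    (g := fun Φ : EuclideanSpace ℝ (Fin d) [×2]→L[ℝ] ℝ =>
      ∑ i : Fin d, Φ ![EuclideanSpace.single i 1, EuclideanSpace.single i 1])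
    (by simp)

theorem ContDiff.iterate_lap {n k : ℕ} (hf : ContDiff ℝ (n + 2 * k : ℕ) f) :
    ContDiff ℝ n ((Lap d)^[k] f) := by
  induction k generalizing f with
  | zero => simpa using hf
  | succ k ih =>
    rw [Function.iterate_succ_apply]
    exact ih (ContDiff.lap (by convert hf using 2; ring))

theorem HasCompactSupport.iterate_lap {k : ℕ} (hf : HasCompactSupport f) :
    HasCompactSupport ((Lap d)^[k] f) := by
  induction k generalizing f with
  | zero => exact hf
  | succ k ih => exact ih hf.lap

theorem bddAbove_range_abs_iterate_lap {k : ℕ} (hf : ContDiff ℝ (2 * k : ℕ) f)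
    (hfs : HasCompactSupport f) : BddAbove (Set.range fun α => |(Lap d)^[k] f α|) :=
  have hcont : Continuous ((Lap d)^[k] f) := (ContDiff.iterate_lap (n := 0) (by simpa)).continuous
  hcont.abs.bddAbove_range_of_hasCompactSupport hfs.iterate_lap.abs

end Laplacian

section SlowGrowth

variable {E : Type*} [NormedAddCommGroup E]

def HasSlowGrowth (ρ : E → ℝ) (γ C : ℝ) : Prop :=
  ∀ x α, ρ α ≤ C * ρ x * (1 + ‖x - α‖ / ρ x) ^ γ

variable {ρ : E → ℝ} {γ C ε : ℝ}

theorem HasSlowGrowth.mono_const {C' : ℝ} (h : HasSlowGrowth ρ γ C) (hρ : ∀ x, 0 < ρ x)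
    (hC : C ≤ C') : HasSlowGrowth ρ γ C' := fun x α =>
  have := hρ x
  (h x α).trans (by gcongr)

theorem HasSlowGrowth.one_add_div_rpow_le (h : HasSlowGrowth ρ (1 - ε) C) (hρ : ∀ x, 0 < ρ x)
    (hC : 1 ≤ C) (hε : ε ≤ 1) (x α : E) :
    (1 + ‖x - α‖ / ρ x) ^ ε ≤ C * (1 + ‖x - α‖ / ρ α) := by
  set t := ‖x - α‖ / ρ x with ht
  have hx := hρ x
  have hα := hρ α
  have ht0 : 0 ≤ t := by positivity
  have h1t : 0 < 1 + t := by linarith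
  have hsplit : (1 + t) ^ ε = (1 + t) ^ (ε - 1) + t * (1 + t) ^ (ε - 1) := by
    rw [show ε = ε - 1 + 1 by ring, rpow_add_one h1t.ne', sub_add_cancel]; ring
  have hsmall : (1 + t) ^ (ε - 1) ≤ 1 := rpow_le_one_of_one_le_of_nonpos (by linarith) (by linarith)
  have hfar : t * (1 + t) ^ (ε - 1) ≤ C * (‖x - α‖ / ρ α) := by
    have hden : 0 < C * ρ x * (1 + t) ^ (1 - ε) := by positivity
    calc t * (1 + t) ^ (ε - 1) = C * (‖x - α‖ / (C * ρ x * (1 + t) ^ (1 - ε))) := by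
          rw [show ε - 1 = -(1 - ε) by ring, rpow_neg h1t.le]
          generalize (1 + t) ^ (1 - ε) = X at hden ⊢
          rw [ht]
          field_simp
      _ ≤ C * (‖x - α‖ / ρ α) := by gcongr; exact h x α
  have : 0 ≤ ‖x - α‖ / ρ α := by positivity
  nlinarith

theorem HasSlowGrowth.rpow_mul_one_add_div_rpow_le (h : HasSlowGrowth ρ (1 - ε) C)
    (hρ : ∀ x, 0 < ρ x) (hC : 1 ≤ C) (hε : ε ≤ 1) {p s β : ℝ} (hp : 0 ≤ p) (hs : 0 ≤ s)
    (hβ : (1 - ε) * p - ε * s ≤ β) (x α : E) :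
    ρ α ^ p * (1 + ‖x - α‖ / ρ α) ^ (-s) ≤
      C ^ (p + s) * ρ x ^ p * (1 + ‖x - α‖ / ρ x) ^ β := by
  set t := ‖x - α‖ / ρ x
  have hx := hρ x
  have hα := hρ α
  have h1t : 1 ≤ 1 + t := by simp only [le_add_iff_nonneg_right, t]; positivity
  have hC0 : 0 < C := by linarith
  have hnear : ρ α ^ p ≤ (C * ρ x) ^ p * (1 + t) ^ ((1 - ε) * p) := by
    calc ρ α ^ p ≤ (C * ρ x * (1 + t) ^ (1 - ε)) ^ p := rpow_le_rpow hα.le (h x α) hp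
      _ = (C * ρ x) ^ p * (1 + t) ^ ((1 - ε) * p) := by
        rw [mul_rpow (by positivity) (by positivity), ← rpow_mul (by linarith)]
  have hfar : (1 + ‖x - α‖ / ρ α) ^ (-s) ≤ C ^ s * (1 + t) ^ (-(ε * s)) := by
    calc (1 + ‖x - α‖ / ρ α) ^ (-s) ≤ ((1 + t) ^ ε / C) ^ (-s) :=
          rpow_le_rpow_of_nonpos (by positivity)
            ((div_le_iff₀' hC0).mpr (h.one_add_div_rpow_le hρ hC hε x α)) (by linarith)
      _ = C ^ s * (1 + t) ^ (-(ε * s)) := by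
        rw [div_rpow (by positivity) hC0.le, ← rpow_mul (by linarith), rpow_neg hC0.le,
          div_inv_eq_mul, mul_comm, mul_neg]
  calc ρ α ^ p * (1 + ‖x - α‖ / ρ α) ^ (-s)
      ≤ (C * ρ x) ^ p * (1 + t) ^ ((1 - ε) * p) * (C ^ s * (1 + t) ^ (-(ε * s))) := by
        gcongr
    _ = C ^ (p + s) * ρ x ^ p * (1 + t) ^ ((1 - ε) * p - ε * s) := by
        rw [mul_rpow hC0.le hx.le, rpow_add hC0, rpow_sub (by linarith), rpow_neg (by linarith)]
        ring
    _ ≤ C ^ (p + s) * ρ x ^ p * (1 + t) ^ β := by gcongr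

end SlowGrowth

theorem norm_sub_div_eq_norm_inv_smul {E : Type*} [NormedAddCommGroup E] [NormedSpace ℝ E]
    {r : ℝ} (x α : E) (hr : 0 < r) : ‖x - α‖ / r = ‖r⁻¹ • (x - α)‖ := by
  rw [norm_smul, norm_inv, Real.norm_of_nonneg hr.le, inv_mul_eq_div]

section Haar

variable {E : Type*} [NormedAddCommGroup E] [NormedSpace ℝ E] [FiniteDimensional ℝ E]
  [MeasurableSpace E] [BorelSpace E] (μ : Measure E) [μ.IsAddHaarMeasure] {β r : ℝ}

theorem integrable_one_add_norm_rpow (hβ : β < -finrank ℝ E) :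
    Integrable (fun u : E => (1 + ‖u‖) ^ β) μ := by
  simpa using integrable_one_add_norm (μ := μ) (r := -β) (by linarith)

theorem integral_one_add_norm_rpow_pos (hβ : β < -finrank ℝ E) :
    0 < ∫ u, (1 + ‖u‖) ^ β ∂μ := by
  refine (integral_pos_iff_support_of_nonneg (fun u => by positivity)
    (integrable_one_add_norm_rpow μ hβ)).mpr ?_
  have hsupp : Function.support (fun u : E => (1 + ‖u‖) ^ β) = Set.univ :=
    Function.support_eq_univ fun u => (rpow_pos_of_pos (by positivity) β).ne'
  rw [hsupp, Measure.measure_univ_pos]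
  exact NeZero.ne μ

theorem integrable_one_add_norm_sub_div_rpow (hβ : β < -finrank ℝ E) (hr : 0 < r) (x : E) :
    Integrable (fun α : E => (1 + ‖x - α‖ / r) ^ β) μ := by
  simp_rw [norm_sub_div_eq_norm_inv_smul _ _ hr]
  exact ((integrable_comp_smul_iff μ (fun u : E => (1 + ‖u‖) ^ β) (inv_ne_zero hr.ne')).mpr
    (integrable_one_add_norm_rpow μ hβ)).comp_sub_left x

theorem integral_one_add_norm_sub_div_rpow (hr : 0 < r) (x : E) :
    ∫ α, (1 + ‖x - α‖ / r) ^ β ∂μ = r ^ finrank ℝ E * ∫ u, (1 + ‖u‖) ^ β ∂μ := by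
  simp_rw [norm_sub_div_eq_norm_inv_smul _ _ hr]
  rw [integral_sub_left_eq_self (fun u => (1 + ‖r⁻¹ • u‖) ^ β) μ x,
    Measure.integral_comp_inv_smul μ (fun u => (1 + ‖u‖) ^ β) r, smul_eq_mul,
    abs_of_pos (by positivity)]

theorem HasSlowGrowth.integral_le {ρ : E → ℝ} {C ε : ℝ} (h : HasSlowGrowth ρ (1 - ε) C)
    (hρ : ∀ x, 0 < ρ x) (hC : 1 ≤ C) (hε : ε ≤ 1) {p s : ℝ} (hp : 0 ≤ p) (hs : 0 ≤ s)
    (hβ : (1 - ε) * p - ε * s ≤ β) (hβd : β < -finrank ℝ E) {φ : E → ℝ} {M : ℝ}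
    (hφ : ∀ α, |φ α| ≤ M) (x : E) :
    ∫ α, |φ α| * ρ α ^ p * (1 + ‖x - α‖ / ρ α) ^ (-s) ∂μ ≤
      M * C ^ (p + s) * ρ x ^ (p + finrank ℝ E) * ∫ u, (1 + ‖u‖) ^ β ∂μ := by
  have hM : 0 ≤ M := (abs_nonneg _).trans (hφ x)
  have hbound : ∀ α, |φ α| * ρ α ^ p * (1 + ‖x - α‖ / ρ α) ^ (-s) ≤
      M * C ^ (p + s) * ρ x ^ p * (1 + ‖x - α‖ / ρ x) ^ β := fun α => by
    have := hρ α
    rw [mul_assoc]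
    exact (mul_le_mul (hφ α) (h.rpow_mul_one_add_div_rpow_le hρ hC hε hp hs hβ x α)
      (by positivity) hM).trans_eq (by ring)
  calc ∫ α, |φ α| * ρ α ^ p * (1 + ‖x - α‖ / ρ α) ^ (-s) ∂μ
      ≤ ∫ α, M * C ^ (p + s) * ρ x ^ p * (1 + ‖x - α‖ / ρ x) ^ β ∂μ :=
        integral_mono_of_nonneg (.of_forall fun α => by have := hρ α; positivity)
          ((integrable_one_add_norm_sub_div_rpow μ hβd (hρ x) x).const_mul _) (.of_forall hbound)
    _ = M * C ^ (p + s) * ρ x ^ (p + finrank ℝ E) * ∫ u, (1 + ‖u‖) ^ β ∂μ := by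
        rw [integral_const_mul, integral_one_add_norm_sub_div_rpow μ (hρ x), rpow_add (hρ x),
          rpow_natCast]
        ring

end Haar

theorem slow_growth_error_bound_general
    (d k l : ℕ) (hl : 0 < l) (hdk : d < 2 * k)
    (ε : ℝ) (hε0 : (2 * k : ℝ) / l < ε) (hε1 : ε < 1)
    (Csg : ℝ) (C₀ : ℝ) (hC₀ : 0 < C₀) :
    ∃ C > 0, ∀ ρ : EuclideanSpace ℝ (Fin d) → ℝ, Measurable ρ → (∀ x, 0 < ρ x) →
      (∀ x α, ρ α ≤ Csg * ρ x * (1 + ‖x - α‖ / ρ x) ^ (1 - ε)) →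
      ∀ f g : EuclideanSpace ℝ (Fin d) → ℝ,
        ContDiff ℝ (2 * k) f → HasCompactSupport f →
        (∀ x, |f x - g x| ≤ C₀ * ∫ α, |(Lap d)^[k] f α| *
            ρ α ^ ((2 * k : ℝ) - d) * (1 + ‖x - α‖ / ρ α) ^ (-((l : ℝ) + d - 2 * k))) →
        ∀ x, |f x - g x| ≤ C * ρ x ^ (2 * k : ℝ) * ⨆ α, |(Lap d)^[k] f α| := by
  have hεl : (2 * k : ℝ) < ε * l := (div_lt_iff₀ (by exact_mod_cast hl)).mp hε0
  have hdk' : (d : ℝ) < 2 * k := by exact_mod_cast hdk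
  have hβ : (2 * k : ℝ) - d - ε * l < -finrank ℝ (EuclideanSpace ℝ (Fin d)) := by
    rw [finrank_euclideanSpace_fin]; linarith
  have h2kl : (2 * k : ℝ) < l := hεl.trans (mul_lt_of_lt_one_left (by exact_mod_cast hl) hε1)
  set C₁ := max 1 Csg
  set I := ∫ u : EuclideanSpace ℝ (Fin d), (1 + ‖u‖) ^ ((2 * k : ℝ) - d - ε * l)
  have hI : 0 < I := integral_one_add_norm_rpow_pos volume hβ
  refine ⟨C₀ * C₁ ^ (l : ℝ) * I, by positivity, ?_⟩
  intro ρ _ hρ hsg f g hf hfs hfg x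
  have hM := le_ciSup (bddAbove_range_abs_iterate_lap (by exact_mod_cast hf) hfs)
  have hint := (HasSlowGrowth.mono_const hsg hρ (le_max_right 1 Csg)).integral_le volume hρ
    (le_max_left 1 Csg) hε1.le (p := 2 * k - d) (s := l + d - 2 * k) (by linarith)
    (by linarith) (le_of_eq (by ring)) hβ hM x
  calc |f x - g x| ≤ _ := hfg x
    _ ≤ _ := mul_le_mul_of_nonneg_left hint hC₀.le
    _ = C₀ * C₁ ^ (l : ℝ) * I * ρ x ^ (2 * k : ℝ) * ⨆ α, |(Lap d)^[k] f α| := by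
        rw [finrank_euclideanSpace_fin, sub_add_cancel,
          show (2 * k - d + (l + d - 2 * k) : ℝ) = l by ring]
        ring

/-- Let `2k > d`, `ε ∈ (2k/ℓ, 1)`, and let `ρ` be a positive measurable
function with `(1-ε)`-slow growth (constant `C_sg`). If `f` is `C^(2k)` with compact
support and `g` satisfies the pointwise bound
`|f(x) - g(x)| ≤ C₀ ∫ |Δᵏf(α)| ρ(α)^(2k-d) (1 + |x-α|/ρ(α))^(-(ℓ+d-2k)) dα`,
then `|f(x) - g(x)| ≤ C ρ(x)^(2k) ‖Δᵏf‖_∞` for a constant `C` depending only on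
`d, k, ℓ, ε, C_sg, C₀`. -/
theorem slow_growth_error_bound
    (d k l : ℕ) (hd : 0 < d) (hk : 0 < k) (hl : 0 < l) (hdk : d < 2 * k)
    (ε : ℝ) (hε0 : (2 * k : ℝ) / l < ε) (hε1 : ε < 1)
    (Csg : ℝ) (hCsg : 0 < Csg) (C₀ : ℝ) (hC₀ : 0 < C₀) :
    ∃ C > 0, ∀ ρ : EuclideanSpace ℝ (Fin d) → ℝ, Measurable ρ → (∀ x, 0 < ρ x) →
      (∀ x α, ρ α ≤ Csg * ρ x * (1 + ‖x - α‖ / ρ x) ^ (1 - ε)) →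
      ∀ f g : EuclideanSpace ℝ (Fin d) → ℝ,
        ContDiff ℝ (2 * k) f → HasCompactSupport f →
        (∀ x, |f x - g x| ≤ C₀ * ∫ α, |(Lap d)^[k] f α| *
            ρ α ^ ((2 * k : ℝ) - d) * (1 + ‖x - α‖ / ρ α) ^ (-((l : ℝ) + d - 2 * k))) →
        ∀ x, |f x - g x| ≤ C * ρ x ^ (2 * k : ℝ) * ⨆ α, |(Lap d)^[k] f α| :=
  slow_growth_error_bound_general d k l hl hdk ε hε0 hε1 Csg C₀ hC₀
end

section
/- Let d be a positive integer, σ > 0, Γ ≥ 1, C₀ > 0, M ≥ 0, r > 0, C_sm > 0, and let ρ : ℝ^d → ℝ be a positive function satisfying self-majorization of order r with constant C_sm. Let D be a set of indices ν, each assigned a gender e(ν) ∈ {1, …, 2^d − 1}, a scale ℓ(ν) = 2^{j(ν)} with j(ν) ∈ ℤ, and a corner c(ν) = 2^{j(ν)}·m(ν) with m(ν) ∈ ℤ^d, distinct indices having distinct triples. For each ν ∈ D let ψ_ν : ℝ^d → ℝ be supported in the closed ball B(c(ν), Γ·ℓ(ν)) with |ψ_ν(x)| ≤ C₀ for all x,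 and let f_ν ∈ ℝ satisfy |f_ν| ≤ M·ℓ(ν)^σ. Let D_b = { ν ∈ D : there exists y ∈ B(c(ν), Γ·ℓ(ν)) with ρ(y) > ℓ(ν) }. Then there exists a constant C > 0, depending only on d, σ, Γ, C₀, r and C_sm, such that for every x ∈ ℝ^d, ∑_{ν ∈ D_b} |f_ν| · |ψ_ν(x)| ≤ C · M · ρ(x)^σ. -/
/-!
Only terms with `ψ_ν(x) ≠ 0` contribute, so `x` lies in the ball of `ν`. If moreover `ν` is bad,
some `y` in that ball has `ρ(y) > ℓ(ν)`, and since `|x - y| ≤ 2Γℓ(ν)`, self-majorization gives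
`ℓ(ν) ≤ K ρ(x)` with `K = (1 + 2Γ)^r / C_sm`. At a fixed scale `2^k` the corners whose ball
contains `x` lie in a box of `(⌊2Γ⌋ + 1)^d` lattice points, so each scale contributes at most
`2^d (⌊2Γ⌋ + 1)^d C₀ M 2^{kσ}`, and the geometric series over the scales `2^k ≤ K ρ(x)` sums to
`O(M ρ(x)^σ)`.
-/

open Real Finset Metric

def SelfMajorizing {E : Type*} [SeminormedAddCommGroup E] (ρ : E → ℝ) (r Csm : ℝ) : Prop :=
  ∀ x y, ρ y ≥ Csm * ρ x * (1 + ‖x - y‖ / ρ x) ^ (-r)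

section SelfMajorizing

variable {E : Type*} [SeminormedAddCommGroup E] {ρ : E → ℝ} {r Csm : ℝ}

theorem SelfMajorizing.le_mul (hρ : SelfMajorizing ρ r Csm) (hCsm : 0 < Csm) (hr : 0 ≤ r)
    {a ℓ : ℝ} {x y : E} (ha : 0 ≤ a) (hℓ : 0 ≤ ℓ) (hℓy : ℓ < ρ y) (hxy : ‖y - x‖ ≤ a * ℓ) :
    ℓ ≤ (1 + a) ^ r / Csm * ρ x := by
  have hρy : 0 < ρ y := hℓ.trans_lt hℓy
  have hbase : 1 + ‖y - x‖ / ρ y ≤ 1 + a := by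
    gcongr
    rw [div_le_iff₀ hρy]
    nlinarith
  have hdecay : (1 + a) ^ (-r) ≤ (1 + ‖y - x‖ / ρ y) ^ (-r) :=
    rpow_le_rpow_of_nonpos (by positivity) hbase (neg_nonpos.2 hr)
  have hlower : Csm * ℓ * ((1 + a) ^ r)⁻¹ ≤ ρ x := by
    rw [← rpow_neg (by positivity)]
    calc Csm * ℓ * (1 + a) ^ (-r) ≤ Csm * ρ y * (1 + ‖y - x‖ / ρ y) ^ (-r) := by gcongr
      _ ≤ ρ x := hρ y x
  rw [div_mul_eq_mul_div, le_div_iff₀ hCsm]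
  calc ℓ * Csm = Csm * ℓ * ((1 + a) ^ r)⁻¹ * (1 + a) ^ r := by field_simp
    _ ≤ ρ x * (1 + a) ^ r := by gcongr
    _ = (1 + a) ^ r * ρ x := mul_comm _ _

theorem SelfMajorizing.le_of_mem_closedBall (hρ : SelfMajorizing ρ r Csm) (hCsm : 0 < Csm)
    (hr : 0 ≤ r) {Γ ℓ : ℝ} {c x y : E} (hΓ : 0 ≤ Γ) (hℓ : 0 ≤ ℓ)
    (hx : x ∈ closedBall c (Γ * ℓ)) (hy : y ∈ closedBall c (Γ * ℓ)) (hℓy : ℓ < ρ y) :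
    ℓ ≤ (1 + 2 * Γ) ^ r / Csm * ρ x :=
  hρ.le_mul hCsm hr (by positivity) hℓ hℓy <| by
    rw [← dist_eq_norm]
    linarith [dist_triangle_right y x c, mem_closedBall.1 hx, mem_closedBall.1 hy]

end SelfMajorizing

theorem Finset.sum_le_div_one_sub_of_le_mul_succ {w : ℤ → ℝ} {q : ℝ} (hw0 : ∀ k, 0 ≤ w k)
    (hq : q < 1) (hw : ∀ k, w k ≤ q * w (k + 1)) (J : Finset ℤ) {L : ℤ}
    (hJ : ∀ k ∈ J, k ≤ L) : ∑ k ∈ J, w k ≤ w L / (1 - q) := by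
  have hq' : 0 < 1 - q := sub_pos.2 hq
  have hmono : Monotone w :=
    monotone_int_of_le_succ fun k => (hw k).trans (by nlinarith [hw0 (k + 1)])
  induction J using Finset.induction_on_max generalizing L with
  | empty => simpa using div_nonneg (hw0 L) hq'.le
  | insert a s hlt ih =>
    rw [sum_insert fun h => (hlt a h).false]
    have hs : ∑ k ∈ s, w k ≤ w (a - 1) / (1 - q) :=
      ih fun k hk => by linarith [hlt k hk]
    have hprev : w (a - 1) ≤ q * w a := by simpa using hw (a - 1)
    calc w a + ∑ k ∈ s, w k ≤ w a + q * w a / (1 - q) := by gcongr; exact hs.trans (by gcongr)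
      _ = w a / (1 - q) := by field_simp; ring
      _ ≤ w L / (1 - q) := by gcongr; exact hmono (hJ a (mem_insert_self a s))

theorem one_sub_two_rpow_neg_pos {σ : ℝ} (hσ : 0 < σ) : 0 < 1 - (2 : ℝ) ^ (-σ) :=
  sub_pos.2 (rpow_lt_one_of_one_lt_of_neg one_lt_two (neg_neg_of_pos hσ))

theorem sum_two_zpow_rpow_le {σ A : ℝ} (hσ : 0 < σ) (hA : 0 < A) (J : Finset ℤ)
    (hJ : ∀ k ∈ J, (2 : ℝ) ^ k ≤ A) :
    ∑ k ∈ J, ((2 : ℝ) ^ k) ^ σ ≤ A ^ σ / (1 - 2 ^ (-σ)) := by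
  have hstep (k : ℤ) : ((2 : ℝ) ^ k) ^ σ = 2 ^ (-σ) * ((2 : ℝ) ^ (k + 1)) ^ σ := by
    rw [zpow_add_one₀ two_ne_zero, mul_rpow (by positivity) zero_le_two, rpow_neg zero_le_two]
    field_simp
  have hq := one_sub_two_rpow_neg_pos hσ
  calc ∑ k ∈ J, ((2 : ℝ) ^ k) ^ σ ≤ ((2 : ℝ) ^ Int.log 2 A) ^ σ / (1 - 2 ^ (-σ)) :=
        J.sum_le_div_one_sub_of_le_mul_succ (fun k => by positivity) (by linarith)
          (fun k => (hstep k).le) fun k hk => (Int.zpow_le_iff_le_log one_lt_two hA).1 (by exact_mod_cast hJ k hk)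
    _ ≤ A ^ σ / (1 - 2 ^ (-σ)) := by
        gcongr
        exact_mod_cast Int.zpow_log_le_self one_lt_two hA

theorem Finset.sum_comp_le_mul_sum_image {ι κ : Type*} [DecidableEq κ] (s : Finset ι)
    (g : ι → κ) {w : κ → ℝ} (hw : ∀ k, 0 ≤ w k) {n : ℕ}
    (hn : ∀ k ∈ s.image g, #{i ∈ s | g i = k} ≤ n) :
    ∑ i ∈ s, w (g i) ≤ n * ∑ k ∈ s.image g, w k := by
  rw [sum_comp, mul_sum]
  refine sum_le_sum fun k hk => ?_
  rw [nsmul_eq_mul]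
  exact mul_le_mul_of_nonneg_right (by exact_mod_cast hn k hk) (hw k)

theorem Int.card_Icc_ceil_sub_floor_add_le (y : ℝ) {Γ : ℝ} (hΓ : 0 ≤ Γ) :
    #(Icc ⌈y - Γ⌉ ⌊y + Γ⌋) ≤ ⌊2 * Γ⌋₊ + 1 := by
  have hlen : ⌊y + Γ⌋ - ⌈y - Γ⌉ ≤ ⌊2 * Γ⌋ :=
    Int.le_floor.2 <| by push_cast; linarith [Int.floor_le (y + Γ), Int.le_ceil (y - Γ)]
  have := Int.natCast_floor_eq_floor (show 0 ≤ 2 * Γ by positivity)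
  rw [Int.card_Icc]
  omega

theorem card_le_of_forall_abs_sub_le {d : ℕ} (y : Fin d → ℝ) {Γ : ℝ} (hΓ : 0 ≤ Γ)
    (S : Finset (Fin d → ℤ)) (hS : ∀ n ∈ S, ∀ i, |y i - n i| ≤ Γ) :
    #S ≤ (⌊2 * Γ⌋₊ + 1) ^ d := by
  have hsub : S ⊆ Fintype.piFinset fun i => Icc ⌈y i - Γ⌉ ⌊y i + Γ⌋ := fun n hn =>
    Fintype.mem_piFinset.2 fun i => by
      have := abs_le.1 (hS n hn i)
      exact mem_Icc.2 ⟨Int.ceil_le.2 (by linarith), Int.le_floor.2 (by linarith)⟩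
  calc #S ≤ ∏ i, #(Icc ⌈y i - Γ⌉ ⌊y i + Γ⌋) := by
        simpa only [Fintype.card_piFinset] using card_le_card hsub
    _ ≤ (⌊2 * Γ⌋₊ + 1) ^ d := by
        simpa using
          prod_le_pow_card univ _ _ fun i _ => Int.card_Icc_ceil_sub_floor_add_le (y i) hΓ

noncomputable def dyadicPoint {d : ℕ} (k : ℤ) (n : Fin d → ℤ) : EuclideanSpace ℝ (Fin d) :=
  (EuclideanSpace.equiv (Fin d) ℝ).symm fun i => (2 : ℝ) ^ k * n i

theorem abs_div_sub_le_of_mem_closedBall_dyadicPoint {d : ℕ} {x : EuclideanSpace ℝ (Fin d)}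
    {k : ℤ} {n : Fin d → ℤ} {Γ : ℝ} (hx : x ∈ closedBall (dyadicPoint k n) (Γ * 2 ^ k))
    (i : Fin d) : |x i / 2 ^ k - n i| ≤ Γ := by
  have hk : (0 : ℝ) < 2 ^ k := by positivity
  have hcoord : |x i - 2 ^ k * n i| ≤ Γ * 2 ^ k :=
    calc |x i - 2 ^ k * n i| = ‖(x - dyadicPoint k n) i‖ := by simp [dyadicPoint]
      _ ≤ ‖x - dyadicPoint k n‖ := PiLp.norm_apply_le _ i
      _ ≤ Γ * 2 ^ k := mem_closedBall_iff_norm.1 hx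
  rw [show x i / 2 ^ k - n i = (x i - 2 ^ k * n i) / 2 ^ k by field_simp, abs_div,
    abs_of_pos hk, div_le_iff₀ hk]
  exact hcoord

section Wavelets

variable {d : ℕ} {D : Type*} {e : D → ℕ} {j : D → ℤ} {m : D → Fin d → ℤ}

theorem card_le_of_forall_mem_closedBall_dyadicPoint (he : ∀ ν, 1 ≤ e ν ∧ e ν ≤ 2 ^ d - 1)
    (hinj : Function.Injective fun ν => (e ν, j ν, m ν)) {Γ : ℝ} (hΓ : 0 ≤ Γ)
    (x : EuclideanSpace ℝ (Fin d)) (k : ℤ) (s : Finset D)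
    (hs : ∀ ν ∈ s, j ν = k ∧ x ∈ closedBall (dyadicPoint k (m ν)) (Γ * 2 ^ k)) :
    #s ≤ 2 ^ d * (⌊2 * Γ⌋₊ + 1) ^ d := by
  classical
  have hinjOn : Set.InjOn (fun ν => (e ν, m ν)) s := fun ν hν ν' hν' h => by
    simp only [Prod.mk.injEq] at h
    exact hinj (Prod.ext h.1 (Prod.ext ((hs ν hν).1.trans (hs ν' hν').1.symm) h.2))
  have hmaps : Set.MapsTo (fun ν => (e ν, m ν)) s
      (Icc 1 (2 ^ d - 1) ×ˢ s.image m : Finset (ℕ × (Fin d → ℤ))) :=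
    fun ν hν => mem_product.2 ⟨mem_Icc.2 (he ν), mem_image_of_mem m hν⟩
  have hm : #(s.image m) ≤ (⌊2 * Γ⌋₊ + 1) ^ d :=
    card_le_of_forall_abs_sub_le (fun i => x i / 2 ^ k) hΓ _ <| by
      simp only [mem_image]
      rintro _ ⟨ν, hν, rfl⟩
      exact abs_div_sub_le_of_mem_closedBall_dyadicPoint (hs ν hν).2
  calc #s ≤ (2 ^ d - 1) * #(s.image m) := by
        simpa using card_le_card_of_injOn _ hmaps hinjOn
    _ ≤ 2 ^ d * (⌊2 * Γ⌋₊ + 1) ^ d := Nat.mul_le_mul (Nat.sub_le _ _) hm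

theorem sum_abs_mul_abs_le_of_forall_bad {σ Γ C₀ r Csm M : ℝ} (hσ : 0 < σ) (hΓ : 0 ≤ Γ)
    (hr : 0 ≤ r) (hCsm : 0 < Csm) (hC₀ : 0 ≤ C₀) (hM : 0 ≤ M)
    {ρ : EuclideanSpace ℝ (Fin d) → ℝ} (hsm : SelfMajorizing ρ r Csm)
    (he : ∀ ν, 1 ≤ e ν ∧ e ν ≤ 2 ^ d - 1) (hinj : Function.Injective fun ν => (e ν, j ν, m ν))
    {ψ : D → EuclideanSpace ℝ (Fin d) → ℝ}
    (hsupp : ∀ ν, Function.support (ψ ν) ⊆ closedBall (dyadicPoint (j ν) (m ν)) (Γ * 2 ^ j ν))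
    (hψ : ∀ ν x, |ψ ν x| ≤ C₀) {f : D → ℝ} (hf : ∀ ν, |f ν| ≤ M * ((2 : ℝ) ^ j ν) ^ σ)
    (hbad : ∀ ν, ∃ y ∈ closedBall (dyadicPoint (j ν) (m ν)) (Γ * 2 ^ j ν), (2 : ℝ) ^ j ν < ρ y)
    {x : EuclideanSpace ℝ (Fin d)} (hρx : 0 < ρ x) (s : Finset D) :
    ∑ ν ∈ s, |f ν| * |ψ ν x| ≤
      C₀ * (2 ^ d * (⌊2 * Γ⌋₊ + 1) ^ d) * ((1 + 2 * Γ) ^ r / Csm) ^ σ / (1 - 2 ^ (-σ)) *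
        M * ρ x ^ σ := by
  classical
  set K := (1 + 2 * Γ) ^ r / Csm
  set t := s.filter fun ν => ψ ν x ≠ 0
  have hx (ν) (hν : ν ∈ t) : x ∈ closedBall (dyadicPoint (j ν) (m ν)) (Γ * 2 ^ j ν) :=
    hsupp ν (mem_filter.1 hν).2
  have hscale : ∀ k ∈ t.image j, (2 : ℝ) ^ k ≤ K * ρ x := by
    simp only [mem_image]
    rintro _ ⟨ν, hν, rfl⟩
    obtain ⟨y, hy, hρy⟩ := hbad ν
    exact hsm.le_of_mem_closedBall hCsm hr hΓ (by positivity) (hx ν hν) hy hρy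
  have hfiber : ∀ k ∈ t.image j, #{ν ∈ t | j ν = k} ≤ 2 ^ d * (⌊2 * Γ⌋₊ + 1) ^ d :=
    fun k _ => card_le_of_forall_mem_closedBall_dyadicPoint he hinj hΓ x k _ fun ν hν => by
      obtain ⟨hνt, rfl⟩ := mem_filter.1 hν
      exact ⟨rfl, hx ν hνt⟩
  calc ∑ ν ∈ s, |f ν| * |ψ ν x| = ∑ ν ∈ t, |f ν| * |ψ ν x| :=
        (sum_filter_of_ne (p := fun ν => ψ ν x ≠ 0) fun ν _ h h0 => h (by
          rw [h0, abs_zero, mul_zero])).symm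
    _ ≤ ∑ ν ∈ t, C₀ * M * ((2 : ℝ) ^ j ν) ^ σ := sum_le_sum fun ν _ =>
        (mul_le_mul (hf ν) (hψ ν x) (abs_nonneg _) (by positivity)).trans_eq (by ring)
    _ ≤ C₀ * M * ((2 ^ d * (⌊2 * Γ⌋₊ + 1) ^ d : ℕ) * ∑ k ∈ t.image j, ((2 : ℝ) ^ k) ^ σ) := by
        rw [← mul_sum]
        gcongr
        exact t.sum_comp_le_mul_sum_image j (w := fun k => ((2 : ℝ) ^ k) ^ σ)
          (fun k => by positivity) hfiber
    _ ≤ C₀ * M * ((2 ^ d * (⌊2 * Γ⌋₊ + 1) ^ d : ℕ) * ((K * ρ x) ^ σ / (1 - 2 ^ (-σ)))) := by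
        gcongr
        exact sum_two_zpow_rpow_le hσ (mul_pos (by positivity) hρx) _ hscale
    _ = _ := by
        rw [mul_rpow (by positivity) hρx.le]
        push_cast
        ring

end Wavelets

theorem bad_cubes_sum_bound_general
    (d : ℕ) (σ : ℝ) (hσ0 : 0 < σ)
    (Γ : ℝ) (hΓ : 1 ≤ Γ) (C₀ : ℝ) (hC₀ : 0 < C₀)
    (r : ℝ) (hr : 0 < r) (Csm : ℝ) (hCsm : 0 < Csm) :
    ∃ C > 0, ∀ M : ℝ, 0 ≤ M →
      ∀ ρ : EuclideanSpace ℝ (Fin d) → ℝ, (∀ x, 0 < ρ x) →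
      (∀ x y, ρ y ≥ Csm * ρ x * (1 + ‖x - y‖ / ρ x) ^ (-r)) →
      ∀ (D : Type) (e : D → ℕ) (j : D → ℤ) (m : D → Fin d → ℤ),
        (∀ ν, 1 ≤ e ν ∧ e ν ≤ 2 ^ d - 1) →
        Function.Injective (fun ν => (e ν, j ν, m ν)) →
      ∀ c : D → EuclideanSpace ℝ (Fin d),
        (∀ ν, c ν = (EuclideanSpace.equiv (Fin d) ℝ).symm
            (fun i => (2 : ℝ) ^ (j ν) * (m ν i : ℝ))) →
      ∀ ψ : D → EuclideanSpace ℝ (Fin d) → ℝ,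
        (∀ ν, Function.support (ψ ν) ⊆ Metric.closedBall (c ν) (Γ * (2 : ℝ) ^ (j ν))) →
        (∀ ν x, |ψ ν x| ≤ C₀) →
      ∀ f : D → ℝ, (∀ ν, |f ν| ≤ M * ((2 : ℝ) ^ (j ν)) ^ σ) →
      ∀ x, ∑' ν : {ν : D // ∃ y ∈ Metric.closedBall (c ν) (Γ * (2 : ℝ) ^ (j ν)),
              (2 : ℝ) ^ (j ν) < ρ y},
            ENNReal.ofReal (|f ν| * |ψ ν x|) ≤
          ENNReal.ofReal (C * M * ρ x ^ σ) := by
  refine ⟨C₀ * (2 ^ d * (⌊2 * Γ⌋₊ + 1) ^ d) * ((1 + 2 * Γ) ^ r / Csm) ^ σ / (1 - 2 ^ (-σ)),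
    div_pos (by positivity) (one_sub_two_rpow_neg_pos hσ0), ?_⟩
  intro M hM ρ hρ hsm D e j m he hinj c hc ψ hsupp hψ f hf x
  obtain rfl : c = fun ν => dyadicPoint (j ν) (m ν) := funext hc
  refine ENNReal.summable.tsum_le_of_sum_le fun s => ?_
  rw [← ENNReal.ofReal_sum_of_nonneg fun ν _ => by positivity]
  exact ENNReal.ofReal_le_ofReal <| sum_abs_mul_abs_le_of_forall_bad hσ0 (by linarith) hr.le
    hCsm hC₀.le hM hsm (fun ν => he ν.1) (hinj.comp Subtype.val_injective)
    (fun ν => hsupp ν.1) (fun ν => hψ ν.1) (fun ν => hf ν.1) (fun ν => ν.2) (hρ x) s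

/-- Wavelet indices `ν ∈ D` carry a gender `e(ν) ∈ {1,…,2^d−1}`, a
scale `ℓ(ν) = 2^(j(ν))` and a corner `c(ν) = 2^(j(ν)) m(ν)`, distinct indices having
distinct triples.  Each `ψ_ν` is supported in `B(c(ν), Γ ℓ(ν))` with `|ψ_ν| ≤ C₀`, and
`|f_ν| ≤ M ℓ(ν)^σ`.  If `ρ` is positive and self-majorizing of order `r` with constant
`C_sm`, then over the "bad" cubes
`D_b = {ν : ∃ y ∈ B(c(ν), Γ ℓ(ν)), ρ(y) > ℓ(ν)}` one has
`∑_{ν ∈ D_b} |f_ν| |ψ_ν(x)| ≤ C M ρ(x)^σ` for a constant `C` depending only on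
`d, σ, Γ, C₀, r, C_sm` (the sum interpreted as a `tsum` in `ℝ≥0∞`). -/
theorem bad_cubes_sum_bound
    (d : ℕ) (hd : 0 < d) (σ : ℝ) (hσ0 : 0 < σ)
    (Γ : ℝ) (hΓ : 1 ≤ Γ) (C₀ : ℝ) (hC₀ : 0 < C₀)
    (r : ℝ) (hr : 0 < r) (Csm : ℝ) (hCsm : 0 < Csm) :
    ∃ C > 0, ∀ M : ℝ, 0 ≤ M →
      ∀ ρ : EuclideanSpace ℝ (Fin d) → ℝ, (∀ x, 0 < ρ x) →
      (∀ x y, ρ y ≥ Csm * ρ x * (1 + ‖x - y‖ / ρ x) ^ (-r)) →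
      ∀ (D : Type) (e : D → ℕ) (j : D → ℤ) (m : D → Fin d → ℤ),
        (∀ ν, 1 ≤ e ν ∧ e ν ≤ 2 ^ d - 1) →
        Function.Injective (fun ν => (e ν, j ν, m ν)) →
      ∀ c : D → EuclideanSpace ℝ (Fin d),
        (∀ ν, c ν = (EuclideanSpace.equiv (Fin d) ℝ).symm
            (fun i => (2 : ℝ) ^ (j ν) * (m ν i : ℝ))) →
      ∀ ψ : D → EuclideanSpace ℝ (Fin d) → ℝ,
        (∀ ν, Function.support (ψ ν) ⊆ Metric.closedBall (c ν) (Γ * (2 : ℝ) ^ (j ν))) →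
        (∀ ν x, |ψ ν x| ≤ C₀) →
      ∀ f : D → ℝ, (∀ ν, |f ν| ≤ M * ((2 : ℝ) ^ (j ν)) ^ σ) →
      ∀ x, ∑' ν : {ν : D // ∃ y ∈ Metric.closedBall (c ν) (Γ * (2 : ℝ) ^ (j ν)),
              (2 : ℝ) ^ (j ν) < ρ y},
            ENNReal.ofReal (|f ν| * |ψ ν x|) ≤
          ENNReal.ofReal (C * M * ρ x ^ σ) :=
  bad_cubes_sum_bound_general d σ hσ0 Γ hΓ C₀ hC₀ r hr Csm hCsm
end
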